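/- Let t₀ > 0. There exists a constant C > 0, depending only on t₀, such that the following holds. Let f : (−t₀,0) × ℝ³ → ℝ³ and g : (−t₀,0) × ℝ³ → ℝ be integrable, both vanishing for x outside B₁, and define u(t,x) = ∫_{−t₀}^t ∫_{ℝ³} K(t−s, x−y) g(s,y) dy ds − ∫_{−t₀}^t ∫_{ℝ³} (∇_z K)(t−s, x−y) · f(s,y) dy ds. Then for every t ∈ (−t₀,0) and every x ∈ ℝ³ with |x| > 2, |u(t,x)| ≤ C ( ‖f‖_{L¹((−t₀,0)×ℝ³)} + ‖g‖_{L¹((−t₀,0)×ℝ³)} ) / |x|³. -/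

import Mathlib

open MeasureTheory Set Metric
open scoped ENNReal NNReal

noncomputable section

/-- `ℝ³` with the Euclidean norm. -/
abbrev E3 := EuclideanSpace ℝ (Fin 3)

/-- Spatial partial derivative `∂ⱼ f` of a scalar function. -/
def pd (f : E3 → ℝ) (j : Fin 3) (x : E3) : ℝ :=
  fderiv ℝ f x (EuclideanSpace.single j 1)

/-- `|∇f|² = Σ_{i,j} |∂ⱼ fᵢ|²`. -/
def gradSq (f : E3 → E3) (x : E3) : ℝ :=
  ∑ i, ∑ j, (pd (fun y => f y i) j x) ^ 2

/-- `(u,P)` is a smooth solution of the incompressible Navier–Stokes equations on the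
open set `U ⊆ ℝ × ℝ³`: `u` and `P` are infinitely differentiable on `U`, and on `U` one has
`∂ₜuᵢ + Σⱼ uⱼ ∂ⱼuᵢ + ∂ᵢP − Δuᵢ = 0` and `div u = 0`. -/
def IsNSSolution (u : ℝ → E3 → E3) (P : ℝ → E3 → ℝ) (U : Set (ℝ × E3)) : Prop :=
  ContDiffOn ℝ (⊤ : ℕ∞) (fun q : ℝ × E3 => u q.1 q.2) U ∧
  ContDiffOn ℝ (⊤ : ℕ∞) (fun q : ℝ × E3 => P q.1 q.2) U ∧
  (∀ q ∈ U, ∀ i : Fin 3,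
    deriv (fun s => u s q.2 i) q.1
      + (∑ j, u q.1 q.2 j * pd (fun y => u q.1 y i) j q.2)
      + pd (fun y => P q.1 y) i q.2
      - ∑ j, pd (pd (fun y => u q.1 y i) j) j q.2 = 0) ∧
  (∀ q ∈ U, ∑ i, pd (fun y => u q.1 y i) i q.2 = 0)

/-- The heat kernel on `ℝ³`: `K(τ,z) = (4πτ)^{−3/2} exp(−|z|²/(4τ))`. -/
def heatK (τ : ℝ) (z : E3) : ℝ :=
  (4 * Real.pi * τ) ^ (-(3:ℝ)/2) * Real.exp (-‖z‖ ^ 2 / (4 * τ))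

lemma exp_neg_le_two_div_sq {a : ℝ} (ha : 0 < a) : Real.exp (-a) ≤ 2 / a ^ 2 := by
  have h := Real.pow_div_factorial_le_exp a ha.le 2
  have h2 : a ^ 2 / 2 ≤ Real.exp a := by norm_num [Nat.factorial] at h; linarith
  rw [Real.exp_neg, inv_le_comm₀ (Real.exp_pos a) (by positivity), inv_div]
  exact h2

lemma exp_neg_le_six_div_cube {a : ℝ} (ha : 0 < a) : Real.exp (-a) ≤ 6 / a ^ 3 := by
  have h := Real.pow_div_factorial_le_exp a ha.le 3
  have h2 : a ^ 3 / 6 ≤ Real.exp a := by norm_num [Nat.factorial] at h; linarith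
  rw [Real.exp_neg, inv_le_comm₀ (Real.exp_pos a) (by positivity), inv_div]
  exact h2

lemma heatK_nonneg {τ : ℝ} (hτ : 0 < τ) (z : E3) : 0 ≤ heatK τ z := by
  unfold heatK
  have h4 : 0 < 4 * Real.pi * τ := by positivity
  positivity

lemma coef_le {τ : ℝ} (hτ : 0 < τ) :
    (4 * Real.pi * τ) ^ (-(3:ℝ)/2) ≤ (τ * Real.sqrt τ)⁻¹ := by
  have h1 : (4 * Real.pi * τ) ^ (-(3:ℝ)/2) ≤ τ ^ (-(3:ℝ)/2) :=
    Real.rpow_le_rpow_of_nonpos hτ (by nlinarith [Real.pi_gt_three]) (by norm_num)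
  have h2 : τ ^ (-(3:ℝ)/2) = (τ * Real.sqrt τ)⁻¹ := by
    rw [show (-(3:ℝ)/2) = -(3/2) by ring, Real.rpow_neg hτ.le]
    congr 1
    rw [show ((3:ℝ)/2) = 1 + 1/2 by ring, Real.rpow_add hτ, Real.rpow_one,
      ← Real.sqrt_eq_rpow]
  linarith [h2 ▸ h1]

lemma heatK_le {t₀ τ : ℝ} (hτ : 0 < τ) (hτ' : τ ≤ t₀) {z : E3} (hz : 1 ≤ ‖z‖) :
    heatK τ z ≤ 32 * Real.sqrt t₀ / ‖z‖ ^ 3 := by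
  have hr : (0:ℝ) < ‖z‖ := lt_of_lt_of_le one_pos hz
  have ha : 0 < ‖z‖ ^ 2 / (4 * τ) := by positivity
  have he : Real.exp (-‖z‖ ^ 2 / (4 * τ)) ≤ 2 / (‖z‖ ^ 2 / (4 * τ)) ^ 2 := by
    rw [neg_div]; exact exp_neg_le_two_div_sq ha
  have hc := coef_le hτ
  have hs : Real.sqrt τ * Real.sqrt τ = τ := Real.mul_self_sqrt hτ.le
  have hsp : 0 < Real.sqrt τ := Real.sqrt_pos.mpr hτ
  have hst : Real.sqrt τ ≤ Real.sqrt t₀ := Real.sqrt_le_sqrt hτ'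
  have hKle : heatK τ z ≤ (τ * Real.sqrt τ)⁻¹ * (2 / (‖z‖ ^ 2 / (4 * τ)) ^ 2) := by
    unfold heatK
    exact mul_le_mul hc he (Real.exp_nonneg _) (by positivity)
  refine hKle.trans ?_
  have hkey : (τ * Real.sqrt τ)⁻¹ * (2 / (‖z‖ ^ 2 / (4 * τ)) ^ 2)
      = 32 * Real.sqrt τ / ‖z‖ ^ 4 := by
    field_simp
    linear_combination (-32) * hs
  rw [hkey]
  exact div_le_div₀ (by positivity) (by linarith) (by positivity)
    (pow_le_pow_right₀ hz (by norm_num))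

lemma heatK_hasFDerivAt {τ : ℝ} (hτ : 0 < τ) (z : E3) :
    HasFDerivAt (heatK τ)
      (((4 * Real.pi * τ) ^ (-(3:ℝ)/2) * Real.exp (-‖z‖ ^ 2 / (4 * τ)) * (-(2 * τ)⁻¹)) •
        (innerSL ℝ z)) z := by
  have h1 : HasFDerivAt (fun w : E3 => ‖w‖ ^ 2) (2 • innerSL ℝ z) z :=
    (hasStrictFDerivAt_norm_sq z).hasFDerivAt
  have h2 : HasFDerivAt (fun w : E3 => -‖w‖ ^ 2 / (4 * τ))
      ((-(4 * τ)⁻¹) • (2 • innerSL ℝ z)) z := by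
    have heq : (fun w : E3 => -‖w‖ ^ 2 / (4 * τ)) = fun w : E3 => (-(4 * τ)⁻¹) * ‖w‖ ^ 2 := by
      funext w; ring
    rw [heq]
    exact h1.const_mul _
  have h3 := h2.exp
  have h4 := h3.const_mul ((4 * Real.pi * τ) ^ (-(3:ℝ)/2))
  have heq2 : heatK τ = fun w : E3 =>
      (4 * Real.pi * τ) ^ (-(3:ℝ)/2) * Real.exp (-‖w‖ ^ 2 / (4 * τ)) := rfl
  rw [heq2]
  refine h4.congr_fderiv ?_
  ext v
  simp only [ContinuousLinearMap.coe_smul', Pi.smul_apply, ContinuousLinearMap.smul_apply,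
    smul_eq_mul]
  have : (2 * τ)⁻¹ = 2 * (4 * τ)⁻¹ := by
    rw [mul_inv, mul_inv]; norm_num; ring
  rw [this]
  ring

lemma heatK_grad_le {t₀ τ : ℝ} (hτ : 0 < τ) (hτ' : τ ≤ t₀) {z : E3} (hz : 1 ≤ ‖z‖) (v : E3) :
    |fderiv ℝ (heatK τ) z v| ≤ 192 * Real.sqrt t₀ / ‖z‖ ^ 3 * ‖v‖ := by
  have hr : (0:ℝ) < ‖z‖ := lt_of_lt_of_le one_pos hz
  rw [(heatK_hasFDerivAt hτ z).fderiv]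
  simp only [ContinuousLinearMap.coe_smul', Pi.smul_apply, smul_eq_mul]
  have hinner : |(innerSL ℝ z) v| ≤ ‖z‖ * ‖v‖ := by
    simpa using abs_real_inner_le_norm z v
  have ha : 0 < ‖z‖ ^ 2 / (4 * τ) := by positivity
  have he : Real.exp (-‖z‖ ^ 2 / (4 * τ)) ≤ 384 * τ ^ 3 / ‖z‖ ^ 6 := by
    have h6 := exp_neg_le_six_div_cube ha
    rw [neg_div]
    refine h6.trans (le_of_eq ?_)
    field_simp
    ring
  have hc := coef_le hτ
  have hc0 : (0:ℝ) ≤ (4 * Real.pi * τ) ^ (-(3:ℝ)/2) :=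
    Real.rpow_nonneg (by positivity) _
  have hs : Real.sqrt τ * Real.sqrt τ = τ := Real.mul_self_sqrt hτ.le
  have hsp : 0 < Real.sqrt τ := Real.sqrt_pos.mpr hτ
  have hst : Real.sqrt τ ≤ Real.sqrt t₀ := Real.sqrt_le_sqrt hτ'
  rw [abs_mul]
  have habs : |(4 * Real.pi * τ) ^ (-(3:ℝ)/2) * Real.exp (-‖z‖ ^ 2 / (4 * τ)) * (-(2 * τ)⁻¹)|
      = (4 * Real.pi * τ) ^ (-(3:ℝ)/2) * Real.exp (-‖z‖ ^ 2 / (4 * τ)) * (2 * τ)⁻¹ := by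
    rw [abs_mul, abs_mul, abs_neg, abs_of_nonneg hc0, abs_of_nonneg (Real.exp_nonneg _),
      abs_of_nonneg (by positivity : (0:ℝ) ≤ (2 * τ)⁻¹)]
  rw [habs]
  have hstep : (4 * Real.pi * τ) ^ (-(3:ℝ)/2) * Real.exp (-‖z‖ ^ 2 / (4 * τ)) * (2 * τ)⁻¹
      ≤ (τ * Real.sqrt τ)⁻¹ * (384 * τ ^ 3 / ‖z‖ ^ 6) * (2 * τ)⁻¹ := by
    have := mul_le_mul hc he (Real.exp_nonneg _) (by positivity)
    exact mul_le_mul_of_nonneg_right this (by positivity)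
  calc (4 * Real.pi * τ) ^ (-(3:ℝ)/2) * Real.exp (-‖z‖ ^ 2 / (4 * τ)) * (2 * τ)⁻¹
        * |(innerSL ℝ z) v|
      ≤ ((τ * Real.sqrt τ)⁻¹ * (384 * τ ^ 3 / ‖z‖ ^ 6) * (2 * τ)⁻¹) * (‖z‖ * ‖v‖) := by
        refine mul_le_mul hstep hinner (abs_nonneg _) (by positivity)
    _ = 192 * Real.sqrt τ / ‖z‖ ^ 5 * ‖v‖ := by
        field_simp
        linear_combination (-384 * ‖v‖) * hs
    _ ≤ 192 * Real.sqrt t₀ / ‖z‖ ^ 3 * ‖v‖ := by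
        refine mul_le_mul_of_nonneg_right ?_ (norm_nonneg v)
        exact div_le_div₀ (by positivity) (by linarith) (by positivity)
          (pow_le_pow_right₀ hz (by norm_num))

lemma duhamel_term_bound (t₀ t : ℝ) (ht : t ≤ 0)
    (G : ℝ → E3 → ℝ) (A : ℝ → E3 → ℝ) (M : ℝ) (hM : 0 ≤ M)
    (hA0 : ∀ s y, 0 ≤ A s y)
    (hAint : IntegrableOn (fun q : ℝ × E3 => A q.1 q.2)
      (Set.Ioo (-t₀) 0 ×ˢ (Set.univ : Set E3)))
    (hbound : ∀ s ∈ Set.Ioo (-t₀) t, ∀ y, |G s y| ≤ M * A s y) :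
    |∫ s in Set.Ioo (-t₀) t, ∫ y : E3, G s y|
      ≤ M * ∫ q in Set.Ioo (-t₀) 0 ×ˢ (Set.univ : Set E3), A q.1 q.2 := by
  have hsub : Set.Ioo (-t₀) t ⊆ Set.Ioo (-t₀) 0 := Set.Ioo_subset_Ioo_right ht
  have hmeas : (volume : Measure ℝ).restrict (Set.Ioo (-t₀) t)
      ≤ (volume : Measure ℝ).restrict (Set.Ioo (-t₀) 0) :=
    Measure.restrict_mono hsub le_rfl
  have hprod : Integrable (fun q : ℝ × E3 => A q.1 q.2)
      (((volume : Measure ℝ).restrict (Set.Ioo (-t₀) 0)).prod (volume : Measure E3)) := by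
    rw [Measure.restrict_prod_eq_prod_univ]
    rwa [IntegrableOn, Measure.volume_eq_prod] at hAint
  have hMaj : Integrable (fun s => ∫ y : E3, A s y)
      ((volume : Measure ℝ).restrict (Set.Ioo (-t₀) 0)) := by
    have h := hprod.integral_norm_prod_left
    simpa [Real.norm_eq_abs, abs_of_nonneg (hA0 _ _)] using h
  have hMaj_t : Integrable (fun s => ∫ y : E3, A s y)
      ((volume : Measure ℝ).restrict (Set.Ioo (-t₀) t)) := hMaj.mono_measure hmeas
  have hae : ∀ᵐ s ∂((volume : Measure ℝ).restrict (Set.Ioo (-t₀) t)),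
      Integrable (fun y => A s y) (volume : Measure E3) :=
    (ae_mono hmeas) hprod.prod_right_ae
  calc |∫ s in Set.Ioo (-t₀) t, ∫ y : E3, G s y|
      ≤ ∫ s in Set.Ioo (-t₀) t, |∫ y : E3, G s y| := by
        simpa [Real.norm_eq_abs] using
          norm_integral_le_integral_norm (μ := volume.restrict (Set.Ioo (-t₀) t))
            (fun s => ∫ y : E3, G s y)
    _ ≤ ∫ s in Set.Ioo (-t₀) t, M * ∫ y : E3, A s y := by
        refine integral_mono_of_nonneg (Filter.Eventually.of_forall fun s => abs_nonneg _)
          (hMaj_t.const_mul M) ?_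
        filter_upwards [hae, ae_restrict_mem measurableSet_Ioo] with s hsInt hs
        calc |∫ y : E3, G s y| ≤ ∫ y : E3, |G s y| := by
              simpa [Real.norm_eq_abs] using norm_integral_le_integral_norm (G s)
          _ ≤ ∫ y : E3, M * A s y := by
              refine integral_mono_of_nonneg (Filter.Eventually.of_forall fun y => abs_nonneg _)
                (hsInt.const_mul M) (Filter.Eventually.of_forall fun y => hbound s hs y)
          _ = M * ∫ y : E3, A s y := integral_const_mul M _
    _ ≤ ∫ s in Set.Ioo (-t₀) 0, M * ∫ y : E3, A s y := by
        refine setIntegral_mono_set (hMaj.const_mul M) ?_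
          (HasSubset.Subset.eventuallyLE hsub)
        exact Filter.Eventually.of_forall fun s =>
          mul_nonneg hM (integral_nonneg fun y => hA0 s y)
    _ = M * ∫ s in Set.Ioo (-t₀) 0, ∫ y : E3, A s y := integral_const_mul M _
    _ = M * ∫ q in Set.Ioo (-t₀) 0 ×ˢ (Set.univ : Set E3), A q.1 q.2 := by
        congr 1
        rw [← MeasureTheory.integral_prod _ hprod,
          Measure.restrict_prod_eq_prod_univ, ← Measure.volume_eq_prod]

/-- Decay estimate (inequality (6) of the paper): for data supported in `B₁`, the Duhamel
solution of `∂ₜu − Δu = g + div f`, `u(−t₀) = 0`, satisfies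
`|u(t,x)| ≤ C (‖f‖_{L¹} + ‖g‖_{L¹}) / |x|³` for `|x| > 2`. -/
theorem duhamel_decay (t₀ : ℝ) (ht₀ : 0 < t₀) :
    ∃ C > (0:ℝ), ∀ (f : ℝ → E3 → E3) (g : ℝ → E3 → ℝ),
      IntegrableOn (fun q : ℝ × E3 => f q.1 q.2)
        (Set.Ioo (-t₀) 0 ×ˢ (Set.univ : Set E3)) →
      IntegrableOn (fun q : ℝ × E3 => g q.1 q.2)
        (Set.Ioo (-t₀) 0 ×ˢ (Set.univ : Set E3)) →
      (∀ t x, x ∉ ball (0:E3) 1 → f t x = 0) →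
      (∀ t x, x ∉ ball (0:E3) 1 → g t x = 0) →
      ∀ u : ℝ → E3 → ℝ,
      (∀ t x, u t x = (∫ s in Set.Ioo (-t₀) t, ∫ y : E3, heatK (t - s) (x - y) * g s y)
        - ∫ s in Set.Ioo (-t₀) t, ∫ y : E3, (fderiv ℝ (heatK (t - s)) (x - y)) (f s y)) →
      ∀ t ∈ Set.Ioo (-t₀) 0, ∀ x : E3, 2 < ‖x‖ →
        |u t x| ≤ C * ((∫ q in Set.Ioo (-t₀) 0 ×ˢ (Set.univ : Set E3), ‖f q.1 q.2‖)
            + ∫ q in Set.Ioo (-t₀) 0 ×ˢ (Set.univ : Set E3), |g q.1 q.2|) / ‖x‖ ^ 3 := by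
  refine ⟨1536 * Real.sqrt t₀, by positivity, ?_⟩
  intro f g hf hg hfsupp hgsupp u hu t ht x hx
  have hx0 : (0:ℝ) < ‖x‖ := by linarith
  set M : ℝ := 1536 * Real.sqrt t₀ / ‖x‖ ^ 3 with hMdef
  have hMnn : 0 ≤ M := by positivity
  have hgeom : ∀ y : E3, y ∈ ball (0:E3) 1 →
      1 ≤ ‖x - y‖ ∧ ‖x‖ ^ 3 ≤ 8 * ‖x - y‖ ^ 3 := by
    intro y hy
    have hy1 : ‖y‖ < 1 := by simpa [dist_eq_norm] using mem_ball.mp hy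
    have hxy := norm_sub_norm_le x y
    have hz1 : 1 ≤ ‖x - y‖ := by linarith
    have hz2 : ‖x‖ ≤ 2 * ‖x - y‖ := by linarith
    refine ⟨hz1, ?_⟩
    calc ‖x‖ ^ 3 ≤ (2 * ‖x - y‖) ^ 3 := pow_le_pow_left₀ (norm_nonneg x) hz2 3
      _ = 8 * ‖x - y‖ ^ 3 := by ring
  have hτfacts : ∀ s ∈ Set.Ioo (-t₀) t, 0 < t - s ∧ t - s ≤ t₀ := by
    intro s hs
    exact ⟨by linarith [hs.2], by linarith [hs.1, ht.2]⟩
  have hb1 : ∀ s ∈ Set.Ioo (-t₀) t, ∀ y : E3,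
      |heatK (t - s) (x - y) * g s y| ≤ M * |g s y| := by
    intro s hs y
    obtain ⟨hτ, hτ'⟩ := hτfacts s hs
    by_cases hy : y ∈ ball (0:E3) 1
    · obtain ⟨hz1, hcube⟩ := hgeom y hy
      have hr : (0:ℝ) < ‖x - y‖ := lt_of_lt_of_le one_pos hz1
      have hK := heatK_le hτ hτ' hz1
      have hM32 : 32 * Real.sqrt t₀ / ‖x - y‖ ^ 3 ≤ M := by
        rw [hMdef, div_le_div_iff₀ (by positivity) (by positivity)]
        nlinarith [Real.sqrt_nonneg t₀, mul_nonneg (Real.sqrt_nonneg t₀)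
          (by nlinarith : (0:ℝ) ≤ 8 * ‖x - y‖ ^ 3 - ‖x‖ ^ 3),
          mul_nonneg (Real.sqrt_nonneg t₀) (pow_nonneg (norm_nonneg (x - y)) 3)]
      rw [abs_mul, abs_of_nonneg (heatK_nonneg hτ _)]
      exact mul_le_mul_of_nonneg_right (hK.trans hM32) (abs_nonneg _)
    · simp [hgsupp s y hy]
  have hb2 : ∀ s ∈ Set.Ioo (-t₀) t, ∀ y : E3,
      |(fderiv ℝ (heatK (t - s)) (x - y)) (f s y)| ≤ M * ‖f s y‖ := by
    intro s hs y
    obtain ⟨hτ, hτ'⟩ := hτfacts s hs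
    by_cases hy : y ∈ ball (0:E3) 1
    · obtain ⟨hz1, hcube⟩ := hgeom y hy
      have hr : (0:ℝ) < ‖x - y‖ := lt_of_lt_of_le one_pos hz1
      have hK := heatK_grad_le hτ hτ' hz1 (f s y)
      have hM192 : 192 * Real.sqrt t₀ / ‖x - y‖ ^ 3 ≤ M := by
        rw [hMdef, div_le_div_iff₀ (by positivity) (by positivity)]
        nlinarith [Real.sqrt_nonneg t₀, mul_nonneg (Real.sqrt_nonneg t₀)
          (by nlinarith : (0:ℝ) ≤ 8 * ‖x - y‖ ^ 3 - ‖x‖ ^ 3),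
          mul_nonneg (Real.sqrt_nonneg t₀) (pow_nonneg (norm_nonneg (x - y)) 3)]
      exact hK.trans (mul_le_mul_of_nonneg_right hM192 (norm_nonneg _))
    · simp [hfsupp s y hy]
  have h1 := duhamel_term_bound t₀ t ht.2.le
    (fun s y => heatK (t - s) (x - y) * g s y) (fun s y => |g s y|) M hMnn
    (fun s y => abs_nonneg _) hg.abs hb1
  have h2 := duhamel_term_bound t₀ t ht.2.le
    (fun s y => (fderiv ℝ (heatK (t - s)) (x - y)) (f s y)) (fun s y => ‖f s y‖) M hMnn
    (fun s y => norm_nonneg _) hf.norm hb2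
  rw [hu]
  calc |(∫ s in Set.Ioo (-t₀) t, ∫ y : E3, heatK (t - s) (x - y) * g s y)
        - ∫ s in Set.Ioo (-t₀) t, ∫ y : E3, (fderiv ℝ (heatK (t - s)) (x - y)) (f s y)|
      ≤ |∫ s in Set.Ioo (-t₀) t, ∫ y : E3, heatK (t - s) (x - y) * g s y|
        + |∫ s in Set.Ioo (-t₀) t, ∫ y : E3, (fderiv ℝ (heatK (t - s)) (x - y)) (f s y)| :=
        abs_sub _ _
    _ ≤ M * (∫ q in Set.Ioo (-t₀) 0 ×ˢ (Set.univ : Set E3), |g q.1 q.2|)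
        + M * ∫ q in Set.Ioo (-t₀) 0 ×ˢ (Set.univ : Set E3), ‖f q.1 q.2‖ :=
        add_le_add h1 h2
    _ = 1536 * Real.sqrt t₀ *
          ((∫ q in Set.Ioo (-t₀) 0 ×ˢ (Set.univ : Set E3), ‖f q.1 q.2‖)
            + ∫ q in Set.Ioo (-t₀) 0 ×ˢ (Set.univ : Set E3), |g q.1 q.2|) / ‖x‖ ^ 3 := by
        rw [hMdef]; ring
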